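/- For all integers m, i ≥ 0, the Stirling-Carlitz number of the second kind satisfies {q^m − 1 brace q^i − 1}_C = 1 if m = i, and {q^m − 1 brace q^i − 1}_C = 0 if m ≠ i. -/

import Mathlib

open Polynomial PowerSeries

noncomputable section

namespace Carlitz

variable (F : Type) [Field F] [Fintype F]

/-- `q`, the cardinality of the finite field of constants `𝔽_q`. -/
def q : ℕ := Fintype.card F

/-- The Carlitz polynomial `D_i = ∏_{j=0}^{i-1} (θ^{q^i} - θ^{q^j})` (with `D_0 = 1`). -/
def Dpoly (i : ℕ) : Polynomial F :=
  ∏ j ∈ Finset.range i, (Polynomial.X ^ (q F) ^ i - Polynomial.X ^ (q F) ^ j)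

/-- The Carlitz polynomial `L_i = ∏_{j=1}^{i} (θ - θ^{q^j})` (with `L_0 = 1`). -/
def Lpoly (i : ℕ) : Polynomial F :=
  ∏ j ∈ Finset.range i, (Polynomial.X - Polynomial.X ^ (q F) ^ (j + 1))

/-- The Carlitz factorial `Π(n) = ∏_i D_i^{n_i}` where `n = Σ_i n_i q^i` is the base-`q`
expansion of `n`.  This also equals the Carlitz gamma `Γ_{n+1}`. -/
def cfact (n : ℕ) : Polynomial F :=
  ∏ i ∈ Finset.range (Nat.digits (q F) n).length,
    (Dpoly F i) ^ ((Nat.digits (q F) n).getD i 0)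

/-- The inclusion `A = 𝔽_q[θ] → k = 𝔽_q(θ)`. -/
def toK : Polynomial F →+* RatFunc F := algebraMap _ _

/-- The Carlitz exponential `e_C(z) = Σ_{i≥0} z^{q^i}/D_i` as a power series over `k`. -/
def eC : PowerSeries (RatFunc F) :=
  PowerSeries.mk fun n => ∑ i ∈ Finset.range (n + 1),
    if (q F) ^ i = n then (toK F (Dpoly F i))⁻¹ else 0

/-- The Bernoulli-Carlitz numbers `BC_n`, defined by `Σ_n BC_n z^n/Π(n) = z/e_C(z)`:
since `e_C(z) = z · u(z)` where `u(z) = Σ_m (coeff_{m+1} e_C) z^m` has constant term `1`,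
we have `z/e_C(z) = u(z)⁻¹` and `BC_n = Π(n) · coeff_n (u⁻¹)`. -/
def BCnum (n : ℕ) : RatFunc F :=
  toK F (cfact F n) *
    PowerSeries.coeff n
      (PowerSeries.mk fun m => PowerSeries.coeff (m + 1) (eC F))⁻¹

/-- The Stirling-Carlitz numbers of the second kind `{n brace m}_C`, defined by
`Σ_n {n brace m}_C z^n/Π(n) = e_C(z)^m/Π(m)`, i.e. `{n brace m}_C = Π(n)·coeff_n(e_C^m)/Π(m)`. -/
def StC (n m : ℕ) : RatFunc F :=
  toK F (cfact F n) * PowerSeries.coeff n (eC F ^ m) * (toK F (cfact F m))⁻¹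

/-- The (finite) set of strictly decreasing tuples `i : Fin r → ℕ`,
`i_1 > i_2 > ⋯ > i_r ≥ 0`, with all values `< N`. -/
def decTuples (r N : ℕ) : Finset (Fin r → ℕ) :=
  (Finset.univ.filter fun i : Fin r → Fin N => ∀ a b : Fin r, a < b → i b < i a).image
    fun i l => (i l : ℕ)

/-- The leading (largest) entry `i_1` of a (strictly decreasing) tuple. -/
def lead {r : ℕ} (i : Fin r → ℕ) : ℕ := if h : 0 < r then i ⟨0, h⟩ else 0

/-- The multi-poly-Bernoulli-Carlitz numbers `BC_n^{s,j}`, defined by the generating series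
`Σ_n BC_n^{s,j} z^n/Π(n) = Li_s(e_C(z)·u_{1 j_1}, u_{2 j_2}, …, u_{r j_r})/e_C(z)
 = Σ_{i_1 > ⋯ > i_r ≥ 0} e_C(z)^{q^{i_1}-1} ∏_l u_{l j_l}^{q^{i_l}}/L_{i_l}^{s_l}`,
written out coefficientwise (here `u l` is the datum `u_{l j_l} ∈ A`; the coefficient of
`z^n` in `e_C^{q^{i_1}-1}` vanishes whenever `i_1 > n`, so the sum below is complete). -/
def MPBC {r : ℕ} (s : Fin r → ℕ) (u : Fin r → Polynomial F) (n : ℕ) : RatFunc F :=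
  toK F (cfact F n) * ∑ i ∈ decTuples r (n + 1),
    PowerSeries.coeff n (eC F ^ ((q F) ^ lead i - 1)) *
      ∏ l, (toK F (u l)) ^ ((q F) ^ (i l)) * ((toK F (Lpoly F (i l))) ^ (s l))⁻¹

/-- The two-variable rational function field `K₂ = 𝔽_q(θ)(t)`. -/
abbrev K2 := RatFunc (RatFunc F)

/-- The inclusion `k = 𝔽_q(θ) → 𝔽_q(θ)(t)`. -/
def liftK : RatFunc F →+* K2 F :=
  (algebraMap (Polynomial (RatFunc F)) (K2 F)).comp Polynomial.C

/-- The inclusion `A = 𝔽_q[θ] → 𝔽_q(θ)(t)`. -/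
def liftA : Polynomial F →+* K2 F := (liftK F).comp (toK F)

/-- The inclusion of constants `𝔽_q → 𝔽_q(θ)(t)`. -/
def liftF : F →+* K2 F := (liftA F).comp Polynomial.C

/-- Substitution `θ ↦ t` on a polynomial `P ∈ 𝔽_q[θ]`, landing in `𝔽_q(θ)(t)`
(where `t` is the outer variable `RatFunc.X`); e.g. `D_i|_{θ=t}`. -/
def subT (P : Polynomial F) : K2 F :=
  Polynomial.eval (RatFunc.X : K2 F) (P.map (liftF F))

/-- Evaluation of a polynomial in `A[t]` in `𝔽_q(θ)(t)` (coefficients included via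
`A → 𝔽_q(θ)`, the variable `t` sent to the outer `RatFunc.X`). -/
def evalAT (h : Polynomial (Polynomial F)) : K2 F :=
  Polynomial.eval (RatFunc.X : K2 F) (h.map (liftA F))

/-- The power series `1 - Σ_{i≥0} (∏_{j=1}^{i}(t^{q^i} - θ^{q^j})/D_i|_{θ=t}) x^{q^i}`
appearing in the definition of the Anderson-Thakur polynomials. -/
def ATgen : PowerSeries (K2 F) :=
  1 - PowerSeries.mk fun m => ∑ i ∈ Finset.range (m + 1),
    if (q F) ^ i = m then
      (∏ j ∈ Finset.range i,
        ((RatFunc.X : K2 F) ^ (q F) ^ i - (liftK F RatFunc.X) ^ (q F) ^ (j + 1))) *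
        (subT F (Dpoly F i))⁻¹
    else 0

/-- `H : ℕ → A[t]` is the family of Anderson-Thakur polynomials iff
`{1 - Σ_i (∏_{j=1}^{i}(t^{q^i} - θ^{q^j})/D_i|_{θ=t}) x^{q^i}}⁻¹ = Σ_n (H_n/Γ_{n+1}|_{θ=t}) x^n`,
i.e. the product of the left-hand factor with the right-hand series equals `1`. -/
def IsATFamily (H : ℕ → Polynomial (Polynomial F)) : Prop :=
  ATgen F * (PowerSeries.mk fun n => evalAT F (H n) * (subT F (cfact F n))⁻¹) = 1

/-- Reduction of a rational function `x ∈ k` whose denominator is coprime to `℘`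
into `A/℘A`: reduce numerator and denominator (in lowest terms) and divide. -/
def redmod (℘ : Polynomial F) (x : RatFunc F) : Polynomial F ⧸ Ideal.span {℘} :=
  Ideal.Quotient.mk (Ideal.span {℘}) x.num *
    Ring.inverse (Ideal.Quotient.mk (Ideal.span {℘}) x.denom)

/-- The finite multiple zeta value `ζ_{𝒜_k}(s)_℘ ∈ A/℘A`: the sum of
`1/(a_1^{s_1} ⋯ a_r^{s_r})` over monic `a_1, …, a_r ∈ A` with
`deg ℘ > deg a_1 > ⋯ > deg a_r ≥ 0`. -/
def finMZV (℘ : Polynomial F) {r : ℕ} (s : Fin r → ℕ) : Polynomial F ⧸ Ideal.span {℘} :=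
  ∑ᶠ a ∈ {a : Fin r → Polynomial F |
      (∀ l, (a l).Monic) ∧ (StrictAnti fun l => (a l).natDegree) ∧
        ∀ l, (a l).natDegree < ℘.natDegree},
    ∏ l, Ring.inverse (Ideal.Quotient.mk (Ideal.span {℘}) (a l) ^ (s l))

/-- The finite Carlitz multiple polylogarithm
`Li_{𝒜_k,s}(u_1, …, u_r)_℘ = Σ_{deg ℘ > i_1 > ⋯ > i_r ≥ 0} u_1^{q^{i_1}} ⋯ u_r^{q^{i_r}}
/ (L_{i_1}^{s_1} ⋯ L_{i_r}^{s_r}) ∈ A/℘A`. -/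
def finCMPL (℘ : Polynomial F) {r : ℕ} (s : Fin r → ℕ) (u : Fin r → Polynomial F) :
    Polynomial F ⧸ Ideal.span {℘} :=
  ∑ i ∈ decTuples r ℘.natDegree,
    ∏ l, Ideal.Quotient.mk (Ideal.span {℘}) (u l) ^ ((q F) ^ (i l)) *
      Ring.inverse (Ideal.Quotient.mk (Ideal.span {℘}) (Lpoly F (i l)) ^ (s l))

end Carlitz

/-!
Every exponent occurring in `e_C` is a power of `q`, so has base-`q` digit sum `1`; since digit
sums are subadditive, every exponent occurring in `e_C^N` has digit sum at most `N`. In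
characteristic `p`, with `q` a power of `p`, raising a power series to the `q`-th power
multiplies its exponents by `q` (and twists the coefficients by Frobenius), which preserves digit
sums. From `e_C^(q^(i+1) - 1) = (e_C^(q^i - 1))^q · e_C^(q - 1)` the exponents of
`e_C^(q^i - 1)` therefore have digit sum at most `i(q - 1)`, whereas `q^m - 1` has digit sum
`m(q - 1)`: the coefficient vanishes for `m > i`. For `m ≤ i` everything follows from
`e_C = z + O(z^2)`.
-/

namespace Nat

variable {b : ℕ}

theorem digits_sum_eq_mod_add_div (hb : 1 < b) (n : ℕ) :
    (b.digits n).sum = n % b + (b.digits (n / b)).sum := by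
  rcases n.eq_zero_or_pos with rfl | hn
  · simp
  · rw [digits_def' hb hn, List.sum_cons]

theorem digits_sum_of_le_one (hb : b ≤ 1) (n : ℕ) : (b.digits n).sum = n := by
  interval_cases b
  · cases n <;> simp
  · simp [digits_one]

theorem digits_sum_add_le (m n : ℕ) :
    (b.digits (m + n)).sum ≤ (b.digits m).sum + (b.digits n).sum := by
  rcases le_or_gt b 1 with hb | hb
  · simp only [digits_sum_of_le_one hb, le_refl]
  induction hs : m + n using Nat.strong_induction_on generalizing m n with
  | _ s ih =>
  subst hs
  rcases (m + n).eq_zero_or_pos with h0 | hpos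
  · simp [Nat.eq_zero_of_add_eq_zero_left h0, Nat.eq_zero_of_add_eq_zero_right h0]
  -- `c` is the carry out of the units digit: it costs `b` there and adds only `c ≤ 1` above.
  set c := if b ≤ m % b + n % b then 1 else 0
  have hdiv : (m + n) / b = m / b + n / b + c := Nat.add_div (by omega)
  have hmod : (m + n) % b + b * c = m % b + n % b := by
    have h1 := Nat.div_add_mod (m + n) b
    have h2 := Nat.div_add_mod m b
    have h3 := Nat.div_add_mod n b
    rw [hdiv, mul_add, mul_add] at h1
    linarith
  have hlt : (m + n) / b < m + n := Nat.div_lt_self hpos hb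
  have hc1 : c ≤ b * c := Nat.le_mul_of_pos_left c (by omega)
  have hcarry : (b.digits ((m + n) / b)).sum ≤ (b.digits (m / b + n / b)).sum + c :=
    (ih _ hlt _ _ hdiv.symm).trans (Nat.add_le_add_left (digit_sum_le b c) _)
  have hquot : (b.digits (m / b + n / b)).sum ≤ (b.digits (m / b)).sum + (b.digits (n / b)).sum :=
    ih _ (by omega) _ _ rfl
  rw [digits_sum_eq_mod_add_div hb (m + n), digits_sum_eq_mod_add_div hb m,
    digits_sum_eq_mod_add_div hb n]
  omega

theorem digits_sum_base_mul (hb : 0 < b) (n : ℕ) :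
    (b.digits (b * n)).sum = (b.digits n).sum := by
  rcases Nat.eq_or_lt_of_le hb with rfl | hb
  · rw [Nat.one_mul]
  · rw [digits_sum_eq_mod_add_div hb, Nat.mul_mod_right, Nat.mul_div_cancel_left _ (by omega),
      zero_add]

theorem digits_sum_base_pow (hb : 1 < b) (k : ℕ) : (b.digits (b ^ k)).sum = 1 := by
  induction k with
  | zero => simp [digits_of_lt b 1 one_ne_zero hb]
  | succ k ih => rw [pow_succ', digits_sum_base_mul (by omega), ih]

theorem pow_succ_sub_one (hb : 0 < b) (k : ℕ) : b ^ (k + 1) - 1 = b * (b ^ k - 1) + (b - 1) := by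
  have : b * (b ^ k - 1) + b = b ^ (k + 1) := by
    rw [← mul_add_one, Nat.sub_add_cancel (Nat.one_le_pow _ _ hb), pow_succ']
  omega

theorem digits_sum_base_pow_sub_one (hb : 1 < b) (k : ℕ) :
    (b.digits (b ^ k - 1)).sum = k * (b - 1) := by
  induction k with
  | zero => simp
  | succ k ih =>
    rw [pow_succ_sub_one (by omega), add_comm, digits_add b hb _ _ (by omega) (Or.inl (by omega)),
      List.sum_cons, ih, add_one_mul, add_comm]

end Nat

namespace PowerSeries

variable {R : Type*} [CommRing R]

theorem coeff_pow_expChar_pow (p : ℕ) [ExpChar R p] (k : ℕ) (f : R⟦X⟧) (n : ℕ) :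
    coeff n (f ^ p ^ k) = if p ^ k ∣ n then coeff (n / p ^ k) f ^ p ^ k else 0 := by
  have hp := expChar_ne_zero R p
  have hfrob : map (iterateFrobenius R p k) (expand (p ^ k) (pow_ne_zero k hp) f) = f ^ p ^ k :=
    MvPowerSeries.map_iterateFrobenius_expand p hp f k
  rw [← hfrob, coeff_map, coeff_expand]
  split_ifs
  · rfl
  · exact map_zero _

def DigitSumLE (b N : ℕ) (f : R⟦X⟧) : Prop :=
  ∀ n, coeff n f ≠ 0 → (b.digits n).sum ≤ N

namespace DigitSumLE

variable {b M N : ℕ} {f g : R⟦X⟧}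

theorem one (b : ℕ) : DigitSumLE b 0 (1 : R⟦X⟧) := by
  intro n hn
  rw [coeff_one] at hn
  split_ifs at hn with h
  · simp [h]
  · exact absurd rfl hn

theorem mul (hf : DigitSumLE b M f) (hg : DigitSumLE b N g) :
    DigitSumLE b (M + N) (f * g) := by
  intro n hn
  rw [coeff_mul] at hn
  obtain ⟨⟨i, j⟩, hij, hne⟩ := Finset.exists_ne_zero_of_sum_ne_zero hn
  obtain rfl := Finset.HasAntidiagonal.mem_antidiagonal.mp hij
  exact (Nat.digits_sum_add_le i j).trans
    (add_le_add (hf i (left_ne_zero_of_mul hne)) (hg j (right_ne_zero_of_mul hne)))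

theorem pow (hf : DigitSumLE b N f) (k : ℕ) : DigitSumLE b (k * N) (f ^ k) := by
  induction k with
  | zero => simpa using one b
  | succ k ih => simpa [pow_succ, add_mul] using ih.mul hf

theorem pow_expChar_pow {p k : ℕ} [ExpChar R p] (hf : DigitSumLE (p ^ k) N f) :
    DigitSumLE (p ^ k) N (f ^ p ^ k) := by
  intro n hn
  rw [coeff_pow_expChar_pow] at hn
  split_ifs at hn with hdvd
  · obtain ⟨n, rfl⟩ := hdvd
    have hpk := expChar_pow_pos R p k
    rw [Nat.mul_div_cancel_left _ hpk] at hn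
    rw [Nat.digits_sum_base_mul hpk]
    exact hf n (ne_zero_pow hpk.ne' hn)
  · exact absurd rfl hn

theorem pow_base_pow_sub_one {p k : ℕ} [ExpChar R p] (hf : DigitSumLE (p ^ k) 1 f) (t : ℕ) :
    DigitSumLE (p ^ k) (t * (p ^ k - 1)) (f ^ ((p ^ k) ^ t - 1)) := by
  induction t with
  | zero => simpa using one (p ^ k)
  | succ t ih =>
    rw [Nat.pow_succ_sub_one (expChar_pow_pos R p k), pow_add, pow_mul', add_mul, one_mul]
    exact ih.pow_expChar_pow.mul (by simpa using hf.pow (p ^ k - 1))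

end DigitSumLE

end PowerSeries

namespace Carlitz

variable (F : Type) [Field F] [Fintype F]

theorem one_lt_q : 1 < q F := Fintype.one_lt_card

theorem coeff_eC_eq_zero {n : ℕ} (hn : ∀ j, q F ^ j ≠ n) : coeff n (eC F) = 0 := by
  rw [eC, coeff_mk]
  exact Finset.sum_eq_zero fun j _ => if_neg (hn j)

theorem digitSumLE_eC : DigitSumLE (q F) 1 (eC F) := by
  intro n hn
  obtain ⟨j, rfl⟩ : ∃ j, q F ^ j = n := by
    by_contra! h
    exact hn (coeff_eC_eq_zero F h)
  rw [Nat.digits_sum_base_pow (one_lt_q F)]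

theorem constantCoeff_eC : constantCoeff (eC F) = 0 := by
  rw [← coeff_zero_eq_constantCoeff_apply]
  exact coeff_eC_eq_zero F fun j => (pow_pos (zero_lt_one.trans (one_lt_q F)) j).ne'

theorem coeff_one_eC : coeff 1 (eC F) = 1 := by
  rw [eC, coeff_mk, Finset.sum_range_succ, Finset.sum_range_one,
    if_pos (pow_zero _), if_neg (by rw [pow_one]; exact (one_lt_q F).ne')]
  simp [Dpoly, toK]

theorem coeff_eC_pow_of_lt {n N : ℕ} (h : n < N) : coeff n (eC F ^ N) = 0 :=
  X_pow_dvd_iff.mp (pow_dvd_pow_of_dvd (X_dvd_iff.mpr (constantCoeff_eC F)) N) n h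

theorem coeff_eC_pow_self (N : ℕ) : coeff N (eC F ^ N) = 1 := by
  obtain ⟨u, hu⟩ := X_dvd_iff.mpr (constantCoeff_eC F)
  have hu0 : constantCoeff u = 1 := by
    rw [← coeff_one_eC F, hu, coeff_succ_X_mul, coeff_zero_eq_constantCoeff_apply]
  rw [hu, mul_pow, PowerSeries.coeff_X_pow_mul', if_pos le_rfl, Nat.sub_self,
    coeff_zero_eq_constantCoeff_apply, map_pow, hu0, one_pow]

theorem coeff_eC_pow_q_pow_sub_one_of_lt {m i : ℕ} (h : i < m) :
    coeff (q F ^ m - 1) (eC F ^ (q F ^ i - 1)) = 0 := by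
  obtain ⟨p, _, k, hp, hq⟩ := FiniteField.card' F
  have : ExpChar F p := ExpChar.prime hp
  have hb := one_lt_q F
  have hbound := digitSumLE_eC F
  rw [q, hq] at hb hbound ⊢
  by_contra hne
  have hle := hbound.pow_base_pow_sub_one i _ hne
  rw [Nat.digits_sum_base_pow_sub_one hb] at hle
  exact h.not_ge (Nat.le_of_mul_le_mul_right hle (by omega))

theorem cfact_ne_zero (n : ℕ) : cfact F n ≠ 0 := by
  refine Finset.prod_ne_zero_iff.mpr fun i _ => pow_ne_zero _ ?_
  refine Finset.prod_ne_zero_iff.mpr fun j hj => sub_ne_zero.mpr fun h => ?_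
  have := congrArg natDegree h
  simp only [natDegree_X_pow] at this
  exact (Nat.pow_lt_pow_right (one_lt_q F) (Finset.mem_range.mp hj)).ne' this

theorem StC_self (n : ℕ) : StC F n n = 1 := by
  rw [StC, coeff_eC_pow_self, mul_one]
  exact mul_inv_cancel₀ (RatFunc.algebraMap_ne_zero (cfact_ne_zero F n))

theorem StC_eq_zero_of_coeff_eq_zero {n m : ℕ} (h : coeff n (eC F ^ m) = 0) :
    StC F n m = 0 := by
  rw [StC, h, mul_zero, zero_mul]

/-- For all `m, i ≥ 0`, the Stirling-Carlitz number of the second kind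
satisfies `{q^m − 1 brace q^i − 1}_C = 1` if `m = i` and `= 0` otherwise. -/
theorem StC_qpow_sub_one (m i : ℕ) :
    StC F ((q F) ^ m - 1) ((q F) ^ i - 1) = if m = i then 1 else 0 := by
  rcases lt_trichotomy m i with h | rfl | h
  · rw [if_neg h.ne]
    exact StC_eq_zero_of_coeff_eq_zero F (coeff_eC_pow_of_lt F (Nat.sub_lt_sub_right
      (Nat.one_le_pow _ _ (zero_lt_one.trans (one_lt_q F))) (Nat.pow_lt_pow_right (one_lt_q F) h)))
  · rw [if_pos rfl, StC_self]
  · rw [if_neg h.ne']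
    exact StC_eq_zero_of_coeff_eq_zero F (coeff_eC_pow_q_pow_sub_one_of_lt F h)

end Carlitz
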